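/- If (aₙ) is a complex sequence with ∑_{n=0}^∞ (n+2)⁵/(n+1)·|aₙ|² = M² < ∞, then for every z with |z| < 1, the series ∑ aₙ zⁿ converges absolutely and |∑_{n=0}^∞ aₙ zⁿ| ≤ √(ζ(4) − ζ(5)) · M. -/

import Mathlib

/-! On the closed unit disc `|aₙ zⁿ| ≤ |aₙ|`, and Cauchy–Schwarz with the weights
`wₙ = (n+2)⁵/(n+1)` gives `∑ |aₙ| ≤ √(∑ 1/wₙ) · M`. The constant is
`∑ 1/wₙ = ∑ (n+1)/(n+2)⁵ = ζ(4) − ζ(5)`: the terms `1/m⁴ − 1/m⁵ = (m−1)/m⁵` of `ζ(4) − ζ(5)`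
vanish at `m = 1` (and at `m = 0`, where `1/0 = 0`), so reindexing by `m = n + 2` loses nothing. -/

open Finset

theorem summable_and_tsum_le_sqrt_mul_sqrt_of_weighted {ι : Type*} {w x : ι → ℝ} {S : ℝ}
    (hw : ∀ i, 0 < w i) (hx : 0 ≤ x) (hwx : Summable fun i => w i * x i ^ 2)
    (hS : HasSum (fun i => (w i)⁻¹) S) :
    Summable x ∧ ∑' i, x i ≤ √S * √(∑' i, w i * x i ^ 2) := by
  have hpartial : ∀ u : Finset ι, ∑ i ∈ u, x i ≤ √S * √(∑' i, w i * x i ^ 2) := by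
    intro u
    have hCS : (∑ i ∈ u, x i) ^ 2 ≤ (∑ i ∈ u, (w i)⁻¹) * ∑ i ∈ u, w i * x i ^ 2 :=
      sum_sq_le_sum_mul_sum_of_sq_le_mul u (fun i _ => (inv_pos.2 (hw i)).le)
        (fun i _ => mul_nonneg (hw i).le (sq_nonneg _))
        (fun i _ => by rw [inv_mul_cancel_left₀ (hw i).ne'])
    have hinv : ∑ i ∈ u, (w i)⁻¹ ≤ S := sum_le_hasSum u (fun i _ => (inv_pos.2 (hw i)).le) hS
    have hwx_le : ∑ i ∈ u, w i * x i ^ 2 ≤ ∑' i, w i * x i ^ 2 :=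
      hwx.sum_le_tsum u fun i _ => mul_nonneg (hw i).le (sq_nonneg _)
    have hS_nonneg : 0 ≤ S := hS.nonneg fun i => (inv_pos.2 (hw i)).le
    rw [← Real.sqrt_mul hS_nonneg]
    exact Real.le_sqrt_of_sq_le (hCS.trans (mul_le_mul hinv hwx_le
      (sum_nonneg fun i _ => mul_nonneg (hw i).le (sq_nonneg _)) hS_nonneg))
  exact ⟨summable_of_sum_le hx hpartial, Real.tsum_le_of_sum_le hx hpartial⟩

theorem hasSum_one_div_nat_pow_riemannZeta_re {k : ℕ} (hk : 1 < k) :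
    HasSum (fun n : ℕ => 1 / (n : ℝ) ^ k) (riemannZeta k).re := by
  have hcast : ∑' n : ℕ, 1 / (n : ℂ) ^ k = ((∑' n : ℕ, 1 / (n : ℝ) ^ k : ℝ) : ℂ) := by
    rw [Complex.ofReal_tsum]
    push_cast
    rfl
  rw [zeta_nat_eq_tsum_of_gt_one hk, hcast, Complex.ofReal_re]
  exact (Real.summable_one_div_nat_pow.2 hk).hasSum

theorem hasSum_riemannZeta_sub_riemannZeta_succ {k : ℕ} (hk : 1 < k) :
    HasSum (fun n : ℕ => ((n : ℝ) + 1) / ((n : ℝ) + 2) ^ (k + 1))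
      (riemannZeta k - riemannZeta (k + 1 : ℕ)).re := by
  have hdiff := (hasSum_one_div_nat_pow_riemannZeta_re hk).sub
    (hasSum_one_div_nat_pow_riemannZeta_re (k := k + 1) (by omega))
  rw [← Complex.sub_re] at hdiff
  have hshift := (hasSum_nat_add_iff' 2).mpr hdiff
  have hhead : ∑ i ∈ range 2, (1 / (i : ℝ) ^ k - 1 / (i : ℝ) ^ (k + 1)) = 0 := by
    simp [sum_range_succ, zero_pow (by omega : k ≠ 0)]
  have hterm : ∀ n : ℕ, 1 / ((n + 2 : ℕ) : ℝ) ^ k - 1 / ((n + 2 : ℕ) : ℝ) ^ (k + 1)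
      = ((n : ℝ) + 1) / ((n : ℝ) + 2) ^ (k + 1) := fun n => by
    push_cast
    field_simp
    ring
  rw [hhead, sub_zero] at hshift
  simpa only [hterm] using hshift

theorem stmt5 (a : ℕ → ℂ) (M : ℝ) (hM0 : 0 ≤ M)
    (hsum : Summable (fun n : ℕ => ((n : ℝ) + 2) ^ 5 / ((n : ℝ) + 1) * ‖a n‖ ^ 2))
    (hM : (∑' n : ℕ, ((n : ℝ) + 2) ^ 5 / ((n : ℝ) + 1) * ‖a n‖ ^ 2) = M ^ 2)
    (z : ℂ) (hz : ‖z‖ < 1) :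
    Summable (fun n : ℕ => ‖a n * z ^ n‖) ∧
    ‖∑' n : ℕ, a n * z ^ n‖ ≤ Real.sqrt ((riemannZeta 4 - riemannZeta 5).re) * M := by
  have hS : HasSum (fun n : ℕ => (((n : ℝ) + 2) ^ 5 / ((n : ℝ) + 1))⁻¹)
      (riemannZeta 4 - riemannZeta 5).re := by
    have h := hasSum_riemannZeta_sub_riemannZeta_succ (k := 4) (by norm_num)
    norm_num only [inv_div] at h ⊢
    exact h
  obtain ⟨hsum_norm, hle⟩ := summable_and_tsum_le_sqrt_mul_sqrt_of_weighted
    (fun n => by positivity) (fun n => norm_nonneg (a n)) hsum hS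
  rw [hM, Real.sqrt_sq hM0] at hle
  have hdom : ∀ n, ‖a n * z ^ n‖ ≤ ‖a n‖ := fun n => by
    rw [norm_mul, norm_pow]
    exact mul_le_of_le_one_right (norm_nonneg _) (pow_le_one₀ (norm_nonneg z) hz.le)
  have hsumm : Summable fun n => ‖a n * z ^ n‖ :=
    hsum_norm.of_nonneg_of_le (fun n => norm_nonneg _) hdom
  refine ⟨hsumm, ?_⟩
  calc ‖∑' n, a n * z ^ n‖ ≤ ∑' n, ‖a n * z ^ n‖ := norm_tsum_le_tsum_norm hsumm
    _ ≤ ∑' n, ‖a n‖ := hsumm.tsum_le_tsum hdom hsum_norm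
    _ ≤ _ := hle
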